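/- Let G be a countable torsion-free group which is not cyclic, in which every non-identity element lies in a unique maximal cyclic subgroup, and let H be a group with P(H) isomorphic to P(G). Then: (a) every non-identity element of H lies in a unique maximal cyclic subgroup of H; (b) the directed power graphs of G and H are isomorphic; and (c) every graph isomorphism f : P(G) → P(H) is itself an isomorphism of directed power graphs (for all x, y ∈ G, there is an arc x → y in the directed power graph of G if and only if there is an arc f(x) → f(y) in that of H). -/

import Mathlib

/-!
A graph isomorphism `f` fixes the identity, the only isolated vertex of a torsion-free power graph,
so `H` is torsion-free too. Arcs can then be read off the undirected graph: for an arc `x → y` of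
`G` only finitely many neighbours of `y` are not neighbours of `x` (apart from `x` they are roots
of `y`, which lie in the maximal cyclic subgroup of `y`), whereas if `x = y ^ m` with `|m| ≥ 2`,
the powers `y ^ q` with `m ∤ q` and `q ∤ m` are infinitely many such neighbours. So `f` maps arcs
to arcs; and if `f x → f y` came from an arc `y → x`, then `f x` and `f y` would be mutual powers,
hence inverse to each other, hence have the same neighbours, which again forces `x → y`.
Since `x ∈ ⟨g⟩` is expressed through arcs and `1`, the bijection `f` also carries maximal cyclic
subgroups to maximal cyclic subgroups.
-/

/-- The power graph of a group `G`: distinct `x, y` are adjacent iff one is a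
nonzero integer power of the other. -/
def powerGraph (G : Type*) [Group G] : SimpleGraph G where
  Adj x y := x ≠ y ∧ ∃ n : ℤ, n ≠ 0 ∧ (y = x ^ n ∨ x = y ^ n)
  symm := by
    constructor
    rintro x y ⟨hxy, n, hn, h⟩
    exact ⟨hxy.symm, n, hn, h.symm⟩
  loopless := by constructor; rintro x ⟨h, -⟩; exact h rfl

/-- There is an arc `x → y` in the directed power graph iff `x ≠ y` and `y` is a
nonzero integer power of `x`. -/
def powArc {G : Type*} [Group G] (x y : G) : Prop :=
  x ≠ y ∧ ∃ n : ℤ, n ≠ 0 ∧ y = x ^ n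

/-- A maximal cyclic subgroup: a cyclic subgroup not properly contained in any
cyclic subgroup. -/
def IsMaxCyclic {G : Type*} [Group G] (C : Subgroup G) : Prop :=
  IsCyclic C ∧ ∀ D : Subgroup G, IsCyclic D → C ≤ D → C = D

open Subgroup

namespace SimpleGraph

variable {V W : Type*} {Γ : SimpleGraph V} {Δ : SimpleGraph W}

def FiniteExcessAdj (Γ : SimpleGraph V) (x y : V) : Prop :=
  Γ.Adj x y ∧ (Γ.neighborSet y \ Γ.neighborSet x).Finite

lemma Iso.isIsolated_iff (f : Γ ≃g Δ) {v : V} : Δ.IsIsolated (f v) ↔ Γ.IsIsolated v := by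
  unfold IsIsolated
  rw [f.surjective.forall]
  simp only [f.map_adj_iff]

lemma Iso.finiteExcessAdj_iff (f : Γ ≃g Δ) {x y : V} :
    Δ.FiniteExcessAdj (f x) (f y) ↔ Γ.FiniteExcessAdj x y := by
  have hpre : ⇑f ⁻¹' (Δ.neighborSet (f y) \ Δ.neighborSet (f x)) =
      Γ.neighborSet y \ Γ.neighborSet x := by
    ext z
    simp [f.map_adj_iff]
  refine and_congr f.map_adj_iff ⟨fun h => ?_, fun h => ?_⟩
  · rw [← hpre]
    exact h.preimage f.injective.injOn
  · rw [← hpre] at h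
    exact h.of_preimage f.surjective

end SimpleGraph

lemma Int.finite_setOf_dvd {j : ℤ} (hj : j ≠ 0) : {k : ℤ | k ∣ j}.Finite :=
  (Int.divisors j).finite_toSet.subset fun _ hk => Int.mem_divisors.mpr ⟨hk, hj⟩

lemma Int.infinite_setOf_not_dvd_and_not_dvd {m : ℤ} (hm0 : m ≠ 0) (hm : ¬ IsUnit m) :
    {q : ℤ | ¬ m ∣ q ∧ ¬ q ∣ m}.Infinite := by
  have hrange : (Set.range fun k : ℤ => m * k + 1).Infinite :=
    Set.infinite_range_of_injective fun a b hab => by simpa [hm0] using hab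
  refine (hrange.sdiff (Int.finite_setOf_dvd hm0)).mono ?_
  rintro _ ⟨⟨k, rfl⟩, hdvd⟩
  exact ⟨fun h => hm (isUnit_of_dvd_one ((Int.dvd_add_right (dvd_mul_right m k)).mp h)), hdvd⟩

section PowerGraph

variable {G H : Type*} [Group G] [Group H]

lemma powerGraph_adj_iff_powArc {x y : G} :
    (powerGraph G).Adj x y ↔ powArc x y ∨ powArc y x := by
  constructor
  · rintro ⟨hne, n, hn, h | h⟩
    · exact Or.inl ⟨hne, n, hn, h⟩
    · exact Or.inr ⟨hne.symm, n, hn, h⟩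
  · rintro (⟨hne, n, hn, h⟩ | ⟨hne, n, hn, h⟩)
    · exact ⟨hne, n, hn, Or.inl h⟩
    · exact ⟨hne.symm, n, hn, Or.inr h⟩

lemma mem_zpowers_iff_powArc {g x : G} : x ∈ zpowers g ↔ x = 1 ∨ x = g ∨ powArc g x := by
  constructor
  · rintro ⟨n, rfl⟩
    by_cases hn : n = 0
    · simp [hn]
    by_cases hg : g ^ n = g
    · exact Or.inr (Or.inl hg)
    · exact Or.inr (Or.inr ⟨Ne.symm hg, n, hn, rfl⟩)
  · rintro (rfl | rfl | ⟨-, n, -, rfl⟩)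
    · exact one_mem _
    · exact mem_zpowers _
    · exact zpow_mem (mem_zpowers g) n

lemma eq_one_of_isIsolated_powerGraph {v : G} (hv : (powerGraph G).IsIsolated v) : v = 1 := by
  by_contra hv1
  by_cases hinv : v⁻¹ = v
  · refine hv 1 ⟨hv1, 2, two_ne_zero, Or.inl ?_⟩
    rw [zpow_two, ← mul_inv_cancel v, hinv]
  · exact hv v⁻¹ ⟨Ne.symm hinv, -1, by norm_num, Or.inl (zpow_neg_one v).symm⟩

lemma isIsolated_one_powerGraph_iff :
    (powerGraph G).IsIsolated 1 ↔ ∀ g : G, g ≠ 1 → ¬ IsOfFinOrder g := by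
  constructor
  · intro h1 g hg hfin
    obtain ⟨n, hn, hgn⟩ := isOfFinOrder_iff_pow_eq_one.mp hfin
    exact h1 g ⟨hg.symm, n, by exact_mod_cast hn.ne', Or.inr (by rw [zpow_natCast, hgn])⟩
  · rintro htf y ⟨hne, n, hn, h | h⟩
    · exact hne (by rw [h, one_zpow])
    · exact htf y hne.symm (isOfFinOrder_iff_zpow_eq_one.mpr ⟨n, hn, h.symm⟩)

lemma powerGraph_iso_map_one (htf : ∀ g : G, g ≠ 1 → ¬ IsOfFinOrder g)
    (f : powerGraph G ≃g powerGraph H) : f 1 = 1 :=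
  eq_one_of_isIsolated_powerGraph (f.isIsolated_iff.mpr (isIsolated_one_powerGraph_iff.mpr htf))

lemma torsionFree_of_powerGraph_iso (htf : ∀ g : G, g ≠ 1 → ¬ IsOfFinOrder g)
    (f : powerGraph G ≃g powerGraph H) : ∀ h : H, h ≠ 1 → ¬ IsOfFinOrder h := by
  rw [← isIsolated_one_powerGraph_iff, ← powerGraph_iso_map_one htf f, f.isIsolated_iff,
    isIsolated_one_powerGraph_iff]
  exact htf

lemma eq_inv_of_powArc_of_powArc (htf : ∀ g : G, g ≠ 1 → ¬ IsOfFinOrder g) {a b : G}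
    (hab : powArc a b) (hba : powArc b a) : b = a⁻¹ := by
  obtain ⟨hne, n, -, rfl⟩ := hab
  have ha : a ≠ 1 := by rintro rfl; exact hne (one_zpow n).symm
  have hzp : zpowers a = zpowers (a ^ n) :=
    le_antisymm (zpowers_le.mpr (mem_zpowers_iff_powArc.mpr (Or.inr (Or.inr hba))))
      (zpowers_le.mpr (zpow_mem (mem_zpowers a) n))
  rcases (zpowers_eq_zpowers_iff (htf a ha)).mp hzp with h | h
  · exact absurd h hne
  · exact h.symm

lemma neighborSet_inv_diff_subset (a : G) :
    (powerGraph G).neighborSet a⁻¹ \ (powerGraph G).neighborSet a ⊆ {a} := by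
  rintro z ⟨⟨hne, n, hn, h | h⟩, hz⟩ <;> by_contra hza <;> apply hz
  · exact ⟨Ne.symm hza, -n, neg_ne_zero.mpr hn, Or.inl (by rw [h, inv_zpow, zpow_neg])⟩
  · exact ⟨Ne.symm hza, -n, neg_ne_zero.mpr hn, Or.inr (by rw [zpow_neg, ← h, inv_inv])⟩

lemma neighborSet_diff_subset_of_powArc {x y : G} (h : powArc x y) :
    (powerGraph G).neighborSet y \ (powerGraph G).neighborSet x ⊆
      insert x {z | ∃ m : ℤ, m ≠ 0 ∧ z ^ m = y} := by
  obtain ⟨-, n, hn, rfl⟩ := h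
  rintro z ⟨hyz, hxz⟩
  rcases powerGraph_adj_iff_powArc.mp hyz with ⟨-, m, hm, rfl⟩ | ⟨-, m, hm, hz⟩
  · by_contra hzx
    exact hxz ⟨fun h => hzx (Or.inl h.symm), n * m, mul_ne_zero hn hm,
      Or.inl (zpow_mul x n m).symm⟩
  · exact Or.inr ⟨m, hm, hz.symm⟩

lemma finite_setOf_zpow_eq (htf : ∀ g : G, g ≠ 1 → ¬ IsOfFinOrder g)
    (hG : ∀ g : G, g ≠ 1 → ∃! C : Subgroup G, IsMaxCyclic C ∧ g ∈ C) {y : G} (hy : y ≠ 1) :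
    {z : G | ∃ m : ℤ, m ≠ 0 ∧ z ^ m = y}.Finite := by
  obtain ⟨C, ⟨hC, hyC⟩, huniq⟩ := hG y hy
  obtain ⟨c, rfl⟩ := (C.isCyclic_iff_exists_zpowers_eq_top.mp hC.1)
  obtain ⟨j, rfl⟩ := mem_zpowers_iff.mp hyC
  have hc : c ≠ 1 := by rintro rfl; exact hy (one_zpow j)
  have hj : j ≠ 0 := by rintro rfl; exact hy (zpow_zero c)
  refine ((Int.finite_setOf_dvd hj).image (c ^ ·)).subset ?_
  rintro z ⟨m, hm, hzm⟩
  have hz : z ≠ 1 := by rintro rfl; exact hy (by rw [← hzm, one_zpow])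
  obtain ⟨D, ⟨hD, hzD⟩, -⟩ := hG z hz
  have hDC : D = zpowers c := huniq D ⟨hD, hzm ▸ zpow_mem hzD m⟩
  obtain ⟨k, rfl⟩ := mem_zpowers_iff.mp (hDC ▸ hzD)
  refine ⟨k, ⟨m, (injective_zpow_iff_not_isOfFinOrder.mpr (htf c hc)) ?_⟩, rfl⟩
  simp only [zpow_mul, hzm]

lemma infinite_neighborSet_diff_zpow (htf : ∀ g : G, g ≠ 1 → ¬ IsOfFinOrder g) {y : G}
    (hy : y ≠ 1) {m : ℤ} (hm0 : m ≠ 0) (hm : ¬ IsUnit m) :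
    ((powerGraph G).neighborSet y \ (powerGraph G).neighborSet (y ^ m)).Infinite := by
  have hinj := injective_zpow_iff_not_isOfFinOrder.mpr (htf y hy)
  refine ((Int.infinite_setOf_not_dvd_and_not_dvd hm0 hm).image hinj.injOn).mono ?_
  rintro _ ⟨q, ⟨hmq, hqm⟩, rfl⟩
  refine ⟨⟨fun h => hqm ?_, q, ?_, Or.inl rfl⟩, ?_⟩
  · rw [hinj (h.symm.trans (zpow_one y).symm)]
    exact one_dvd m
  · rintro rfl
    exact hmq (dvd_zero m)
  · rintro ⟨-, n, -, h | h⟩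
    · exact hmq ⟨n, hinj (h.trans (zpow_mul y m n).symm)⟩
    · exact hqm ⟨n, hinj (h.trans (zpow_mul y q n).symm)⟩

lemma finiteExcessAdj_of_powArc (htf : ∀ g : G, g ≠ 1 → ¬ IsOfFinOrder g)
    (hG : ∀ g : G, g ≠ 1 → ∃! C : Subgroup G, IsMaxCyclic C ∧ g ∈ C) {x y : G}
    (h : powArc x y) : (powerGraph G).FiniteExcessAdj x y := by
  have hy : y ≠ 1 := by
    obtain ⟨hne, n, hn, rfl⟩ := h
    intro hxn
    have hx : x = 1 :=
      by_contra fun hx => htf x hx (isOfFinOrder_iff_zpow_eq_one.mpr ⟨n, hn, hxn⟩)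
    exact hne (hx.trans hxn.symm)
  refine ⟨powerGraph_adj_iff_powArc.mpr (Or.inl h), ?_⟩
  exact ((finite_setOf_zpow_eq htf hG hy).insert x).subset (neighborSet_diff_subset_of_powArc h)

lemma powArc_of_finiteExcessAdj (htf : ∀ g : G, g ≠ 1 → ¬ IsOfFinOrder g) {x y : G}
    (h : (powerGraph G).FiniteExcessAdj x y) : powArc x y := by
  obtain ⟨hxy, hfin⟩ := h
  rcases powerGraph_adj_iff_powArc.mp hxy with h | ⟨hne, m, hm0, rfl⟩
  · exact h
  have hy : y ≠ 1 := by rintro rfl; exact hne (one_zpow m).symm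
  by_cases hm : IsUnit m
  · rcases Int.isUnit_iff.mp hm with rfl | rfl
    · exact absurd (zpow_one y).symm hne
    · exact ⟨hne.symm, -1, by norm_num, by rw [zpow_neg_one, zpow_neg_one, inv_inv]⟩
  · exact absurd hfin (infinite_neighborSet_diff_zpow htf hy hm0 hm)

theorem powArc_iff_powerGraph_iso (htfG : ∀ g : G, g ≠ 1 → ¬ IsOfFinOrder g)
    (hG : ∀ g : G, g ≠ 1 → ∃! C : Subgroup G, IsMaxCyclic C ∧ g ∈ C)
    (htfH : ∀ h : H, h ≠ 1 → ¬ IsOfFinOrder h) (f : powerGraph G ≃g powerGraph H) (x y : G) :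
    powArc x y ↔ powArc (f x) (f y) := by
  have hmap : ∀ {a b : G}, powArc a b → powArc (f a) (f b) := fun hab =>
    powArc_of_finiteExcessAdj htfH
      (f.finiteExcessAdj_iff.mpr (finiteExcessAdj_of_powArc htfG hG hab))
  refine ⟨hmap, fun hf => ?_⟩
  have hadj : (powerGraph G).Adj x y :=
    f.map_adj_iff.mp (powerGraph_adj_iff_powArc.mpr (Or.inl hf))
  rcases powerGraph_adj_iff_powArc.mp hadj with hxy | hyx
  · exact hxy
  have hinv : f y = (f x)⁻¹ := eq_inv_of_powArc_of_powArc htfH hf (hmap hyx)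
  have hexcess : (powerGraph H).FiniteExcessAdj (f x) (f y) :=
    ⟨powerGraph_adj_iff_powArc.mpr (Or.inl hf),
      (Set.finite_singleton (f x)).subset (hinv ▸ neighborSet_inv_diff_subset (f x))⟩
  exact powArc_of_finiteExcessAdj htfG (f.finiteExcessAdj_iff.mp hexcess)

lemma mem_zpowers_iff_of_powArc_iff (e : G ≃ H) (he1 : e 1 = 1)
    (harc : ∀ x y : G, powArc x y ↔ powArc (e x) (e y)) (g x : G) :
    e x ∈ zpowers (e g) ↔ x ∈ zpowers g := by
  simp only [mem_zpowers_iff_powArc, ← harc, ← he1, e.apply_eq_iff_eq]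

lemma isMaxCyclic_zpowers_iff {c : G} :
    IsMaxCyclic (zpowers c) ↔ ∀ d : G, c ∈ zpowers d → d ∈ zpowers c := by
  constructor
  · rintro ⟨-, hmax⟩ d hcd
    rw [hmax (zpowers d) inferInstance (zpowers_le.mpr hcd)]
    exact mem_zpowers d
  · refine fun h => ⟨inferInstance, fun D hD hcD => ?_⟩
    obtain ⟨d, rfl⟩ := D.isCyclic_iff_exists_zpowers_eq_top.mp hD
    exact le_antisymm hcD (zpowers_le.mpr (h d (zpowers_le.mp hcD)))

lemma existsUnique_isMaxCyclic_of_equiv (e : G ≃ H)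
    (he : ∀ g x : G, e x ∈ zpowers (e g) ↔ x ∈ zpowers g) {g : G}
    (hg : ∃! C : Subgroup G, IsMaxCyclic C ∧ g ∈ C) :
    ∃! D : Subgroup H, IsMaxCyclic D ∧ e g ∈ D := by
  have hmax : ∀ c : G, IsMaxCyclic (zpowers (e c)) ↔ IsMaxCyclic (zpowers c) := fun c => by
    simp only [isMaxCyclic_zpowers_iff, ← e.forall_congr_right, he]
  obtain ⟨C, ⟨hC, hgC⟩, huniq⟩ := hg
  obtain ⟨c, rfl⟩ := C.isCyclic_iff_exists_zpowers_eq_top.mp hC.1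
  refine ⟨zpowers (e c), ⟨(hmax c).mpr hC, (he c g).mpr hgC⟩, ?_⟩
  rintro D ⟨hD, hgD⟩
  obtain ⟨d, rfl⟩ := D.isCyclic_iff_exists_zpowers_eq_top.mp hD.1
  obtain ⟨d, rfl⟩ := e.surjective d
  have hdc := huniq _ ⟨(hmax d).mp hD, (he d g).mp hgD⟩
  rw [le_antisymm_iff, zpowers_le, zpowers_le] at hdc ⊢
  rwa [he, he]

end PowerGraph

theorem stmt_12_general (G H : Type*) [Group G] [Group H]
    (htf : ∀ g : G, g ≠ 1 → ¬ IsOfFinOrder g)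
    (hG : ∀ g : G, g ≠ 1 → ∃! C : Subgroup G, IsMaxCyclic C ∧ g ∈ C)
    (h : Nonempty (powerGraph G ≃g powerGraph H)) :
    (∀ x : H, x ≠ 1 → ∃! C : Subgroup H, IsMaxCyclic C ∧ x ∈ C) ∧
      (∃ e : G ≃ H, ∀ x y : G, powArc x y ↔ powArc (e x) (e y)) ∧
      (∀ (f : powerGraph G ≃g powerGraph H) (x y : G),
        powArc x y ↔ powArc (f x) (f y)) := by
  obtain ⟨f⟩ := h
  have harc := powArc_iff_powerGraph_iso htf hG (torsionFree_of_powerGraph_iso htf f)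
  have hf1 : f 1 = 1 := powerGraph_iso_map_one htf f
  refine ⟨fun x hx => ?_, ⟨f.toEquiv, harc f⟩, harc⟩
  obtain ⟨g, rfl⟩ := f.surjective x
  have hg : g ≠ 1 := by rintro rfl; exact hx hf1
  exact existsUnique_isMaxCyclic_of_equiv f.toEquiv
    (mem_zpowers_iff_of_powArc_iff f.toEquiv hf1 (harc f)) (hG g hg)

/-- Let `G` be a countable, non-cyclic, torsion-free group in which every
non-identity element lies in a unique maximal cyclic subgroup, and let `H` have
power graph isomorphic to `P(G)`. Then (a) every non-identity element of `H`
lies in a unique maximal cyclic subgroup; (b) the directed power graphs of `G`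
and `H` are isomorphic; (c) every isomorphism `P(G) → P(H)` is an isomorphism of
directed power graphs. -/
theorem stmt_12 (G H : Type*) [Group G] [Group H] [Countable G]
    (htf : ∀ g : G, g ≠ 1 → ¬ IsOfFinOrder g)
    (hnc : ¬ IsCyclic G)
    (hG : ∀ g : G, g ≠ 1 → ∃! C : Subgroup G, IsMaxCyclic C ∧ g ∈ C)
    (h : Nonempty (powerGraph G ≃g powerGraph H)) :
    (∀ x : H, x ≠ 1 → ∃! C : Subgroup H, IsMaxCyclic C ∧ x ∈ C) ∧
      (∃ e : G ≃ H, ∀ x y : G, powArc x y ↔ powArc (e x) (e y)) ∧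
      (∀ (f : powerGraph G ≃g powerGraph H) (x y : G),
        powArc x y ↔ powArc (f x) (f y)) :=
  stmt_12_general G H htf hG h
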